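/- (Remark 2, Case 3: projective symmetry when f(t) = t.) Let ε = ±1 and s ∈ ℝ, and let Ω = {(t, x) : t > 0 and 1 - 2εs·t > 0}. Suppose u : ℝ → ℝ → ℝ is smooth and satisfies ∂_t u + ε ∂_x(u²) + t ∂_x^3 u = 0 for all t > 0, x ∈ ℝ, and suppose v : ℝ → ℝ → ℝ is smooth with v(t/(1 - 2εs·t), x/(1 - 2εs·t)) = (1 - 2εs·t)·u(t, x) + s·x for all (t, x) ∈ Ω. Then for every (t, x) ∈ Ω, at the point (τ, y) = (t/(1 - 2εs·t), x/(1 - 2εs·t)) one has ∂_τ v + ε ∂_y(v²) + τ ∂_y^3 v = 0. (This is the finite form of the additional symmetry generator 2εt² ∂_t + 2εtx ∂_x + (x - 2εtu) ∂_u admitted by u_t + ε(u²)_x + t u_xxx = 0.) -/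

import Mathlib

/-!
For `τ > 0` and `1 + 2εsτ > 0` the hypothesis on `v` determines it completely near `τ`:
with `c = (1 + 2εsτ)⁻¹ = 1 - 2εst` one has `v(τ, y) = c u(cτ, cy) + s c y`. The chain rule gives
`v_τ = c³u_t - 2εs c²(u + c y u_x + s y)`, `v_y = c²u_x + s c` and `v_yyy = c⁴u_xxx`; the terms
coming from the time dependence of `c` cancel those of `ε(v²)_y` exactly, and since `τ c⁴ = c³ t`
the transformed operator at `(τ, y)` is `c³` times the original one at `(t, x) = (cτ, cy)`.
-/

open Real

noncomputable def pdT (u : ℝ → ℝ → ℝ) (t x : ℝ) : ℝ := deriv (fun s => u s x) t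
noncomputable def pdX (u : ℝ → ℝ → ℝ) (t x : ℝ) : ℝ := deriv (fun y => u t y) x
noncomputable def pdX3 (u : ℝ → ℝ → ℝ) (t x : ℝ) : ℝ := deriv (deriv (deriv (fun y => u t y))) x

open Filter Topology Function

noncomputable def kdvOperator (ε : ℝ) (u : ℝ → ℝ → ℝ) (t x : ℝ) : ℝ :=
  pdT u t x + ε * pdX (fun t x => u t x ^ 2) t x + t * pdX3 u t x

noncomputable def projectiveTransform (k s : ℝ) (u : ℝ → ℝ → ℝ) (τ y : ℝ) : ℝ :=
  (1 + k * τ)⁻¹ * u ((1 + k * τ)⁻¹ * τ) ((1 + k * τ)⁻¹ * y) + s * ((1 + k * τ)⁻¹ * y)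

section PartialDerivatives

variable {u : ℝ → ℝ → ℝ}

lemma ContDiff.apply_of_uncurry {n : WithTop ℕ∞} (hu : ContDiff ℝ n (uncurry u)) (t : ℝ) :
    ContDiff ℝ n (u t) :=
  hu.comp (contDiff_const.prodMk contDiff_id)

lemma pdX3_eq_iteratedDeriv (t x : ℝ) : pdX3 u t x = iteratedDeriv 3 (u t) x := by
  rw [iteratedDeriv_eq_iterate]
  rfl

lemma pdX_sq {t x : ℝ} (hu : DifferentiableAt ℝ (u t) x) :
    pdX (fun t x => u t x ^ 2) t x = 2 * u t x * pdX u t x := by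
  simp only [pdX, hu.hasDerivAt.fun_pow 2 |>.deriv]
  ring

lemma pdT_eq_fderiv {t x : ℝ} (hu : DifferentiableAt ℝ (uncurry u) (t, x)) :
    pdT u t x = fderiv ℝ (uncurry u) (t, x) (1, 0) := by
  have h := hu.hasFDerivAt.comp_hasDerivAt t ((hasDerivAt_id t).prodMk (hasDerivAt_const t x))
  exact h.deriv

lemma pdX_eq_fderiv {t x : ℝ} (hu : DifferentiableAt ℝ (uncurry u) (t, x)) :
    pdX u t x = fderiv ℝ (uncurry u) (t, x) (0, 1) := by
  have h := hu.hasFDerivAt.comp_hasDerivAt x ((hasDerivAt_const x t).prodMk (hasDerivAt_id x))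
  exact h.deriv

lemma hasDerivAt_comp_of_differentiableAt {a b : ℝ → ℝ} {a' b' τ : ℝ}
    (hu : DifferentiableAt ℝ (uncurry u) (a τ, b τ))
    (ha : HasDerivAt a a' τ) (hb : HasDerivAt b b' τ) :
    HasDerivAt (fun σ => u (a σ) (b σ))
      (a' * pdT u (a τ) (b τ) + b' * pdX u (a τ) (b τ)) τ := by
  have hab : ((a', b') : ℝ × ℝ) = a' • ((1 : ℝ), (0 : ℝ)) + b' • ((0 : ℝ), (1 : ℝ)) := by
    simp
  refine (hu.hasFDerivAt.comp_hasDerivAt τ (ha.prodMk hb)).congr_deriv ?_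
  rw [pdT_eq_fderiv hu, pdX_eq_fderiv hu, hab, map_add, map_smul, map_smul, smul_eq_mul,
    smul_eq_mul]

end PartialDerivatives

section ProjectiveTransform

variable {k s c τ : ℝ} {u : ℝ → ℝ → ℝ}

lemma projectiveTransform_eq (hc : c * (1 + k * τ) = 1) :
    projectiveTransform k s u τ = fun z => c * u (c * τ) (c * z) + s * (c * z) := by
  obtain rfl := eq_inv_of_mul_eq_one_left hc
  rfl

lemma pdX_projectiveTransform (hc : c * (1 + k * τ) = 1) {y : ℝ}
    (hu : DifferentiableAt ℝ (u (c * τ)) (c * y)) :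
    pdX (projectiveTransform k s u) τ y = c ^ 2 * pdX u (c * τ) (c * y) + s * c := by
  have hlin : HasDerivAt (fun z => c * z) c y := by simpa using (hasDerivAt_id y).const_mul c
  have h : HasDerivAt (fun z => c * u (c * τ) (c * z) + s * (c * z))
      (c * (pdX u (c * τ) (c * y) * c) + s * c) y :=
    ((hu.hasDerivAt.comp y hlin).const_mul c).add (hlin.const_mul s)
  rw [pdX, projectiveTransform_eq hc, h.deriv]
  ring

lemma pdX3_projectiveTransform (hc : c * (1 + k * τ) = 1) {y : ℝ}
    (hu : ContDiff ℝ 3 (u (c * τ))) :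
    pdX3 (projectiveTransform k s u) τ y = c ^ 4 * pdX3 u (c * τ) (c * y) := by
  have hcomp : ContDiff ℝ 3 (fun z => c * u (c * τ) (c * z)) :=
    contDiff_const.mul (hu.comp (contDiff_const.mul contDiff_id))
  have hlin : ContDiff ℝ 3 (fun z => s * (c * z)) := by fun_prop
  rw [pdX3_eq_iteratedDeriv, pdX3_eq_iteratedDeriv, projectiveTransform_eq hc,
    iteratedDeriv_fun_add hcomp.contDiffAt hlin.contDiffAt, iteratedDeriv_const_mul_field,
    iteratedDeriv_comp_const_mul hu, iteratedDeriv_const_mul_field, iteratedDeriv_const_mul_field]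
  simp only [iteratedDeriv_fun_id]
  norm_num
  ring

lemma hasDerivAt_inv_one_add_mul (hc : c * (1 + k * τ) = 1) :
    HasDerivAt (fun σ => (1 + k * σ)⁻¹) (-k * c ^ 2) τ := by
  have hb : 1 + k * τ ≠ 0 := right_ne_zero_of_mul_eq_one hc
  have h := (((hasDerivAt_id' τ).const_mul k).const_add 1).inv hb
  obtain rfl := eq_inv_of_mul_eq_one_left hc
  refine h.congr_deriv ?_
  rw [inv_pow]
  ring

lemma pdT_projectiveTransform (hc : c * (1 + k * τ) = 1) {y : ℝ}
    (hu : DifferentiableAt ℝ (uncurry u) (c * τ, c * y)) :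
    pdT (projectiveTransform k s u) τ y = c ^ 3 * pdT u (c * τ) (c * y)
      - k * c ^ 2 * (u (c * τ) (c * y) + c * y * pdX u (c * τ) (c * y) + s * y) := by
  have hinv := hasDerivAt_inv_one_add_mul hc
  have ht : HasDerivAt (fun σ => (1 + k * σ)⁻¹ * σ) (c ^ 2) τ := by
    refine (hinv.mul (hasDerivAt_id τ)).congr_deriv ?_
    rw [id, ← eq_inv_of_mul_eq_one_left hc]
    linear_combination (-c) * hc
  have hy := hinv.mul_const y
  obtain rfl := eq_inv_of_mul_eq_one_left hc
  have h := (hinv.mul (hasDerivAt_comp_of_differentiableAt hu ht hy)).add (hy.const_mul s)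
  exact h.deriv.trans (by ring)

theorem kdvOperator_projectiveTransform (ε : ℝ) (hu : ContDiff ℝ 3 (uncurry u))
    (hc : c * (1 + 2 * ε * s * τ) = 1) (y : ℝ) :
    kdvOperator ε (projectiveTransform (2 * ε * s) s u) τ y
      = c ^ 3 * kdvOperator ε u (c * τ) (c * y) := by
  have hslice := hu.apply_of_uncurry (c * τ)
  have hdiff : Differentiable ℝ (u (c * τ)) := hslice.differentiable (by norm_num)
  have hvdiff : DifferentiableAt ℝ (projectiveTransform (2 * ε * s) s u τ) y := by
    rw [projectiveTransform_eq hc]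
    fun_prop
  have hv : projectiveTransform (2 * ε * s) s u τ y = c * u (c * τ) (c * y) + s * (c * y) := by
    rw [projectiveTransform_eq hc]
  rw [kdvOperator, kdvOperator, pdT_projectiveTransform hc (hu.differentiable (by norm_num) _),
    pdX_sq hvdiff, pdX_sq (hdiff _), pdX_projectiveTransform hc (hdiff _),
    pdX3_projectiveTransform hc hslice, hv]
  ring

lemma eventuallyEq_projectiveTransform {v : ℝ → ℝ → ℝ}
    (hvu : ∀ t x : ℝ, 0 < t ∧ 0 < 1 - k * t →
      v (t / (1 - k * t)) (x / (1 - k * t)) = (1 - k * t) * u t x + s * x)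
    (hτ : 0 < τ) (hb : 0 < 1 + k * τ) :
    v =ᶠ[𝓝 τ] projectiveTransform k s u := by
  have hb' : ∀ᶠ σ in 𝓝 τ, 0 < 1 + k * σ :=
    continuousAt_const.eventually_lt (by fun_prop) hb
  filter_upwards [eventually_gt_nhds hτ, hb'] with σ hσ hbσ
  funext z
  set c := (1 + k * σ)⁻¹ with hc
  have hc0 : 0 < c := inv_pos.mpr hbσ
  have hct : 1 - k * (c * σ) = c := by
    rw [hc]
    field_simp
    ring
  have h := hvu (c * σ) (c * z) ⟨mul_pos hc0 hσ, hct.symm ▸ hc0⟩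
  rwa [hct, mul_div_cancel_left₀ _ hc0.ne', mul_div_cancel_left₀ _ hc0.ne'] at h

end ProjectiveTransform

lemma kdvOperator_congr {ε τ : ℝ} {v w : ℝ → ℝ → ℝ} (h : v =ᶠ[𝓝 τ] w) (y : ℝ) :
    kdvOperator ε v τ y = kdvOperator ε w τ y := by
  have hT : (fun σ => v σ y) =ᶠ[𝓝 τ] fun σ => w σ y := h.mono fun σ hσ => congrFun hσ y
  simp only [kdvOperator, pdT, pdX, pdX3, h.eq_of_nhds, hT.deriv_eq]

theorem projective_symmetry_f_t_general
    (ε : ℝ) (s : ℝ)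
    (Ω : Set (ℝ × ℝ)) (hΩ : Ω = {p : ℝ × ℝ | 0 < p.1 ∧ 0 < 1 - 2 * ε * s * p.1})
    (u : ℝ → ℝ → ℝ) (hu : ContDiff ℝ (⊤ : ℕ∞) (Function.uncurry u))
    (hupde : ∀ t x : ℝ, 0 < t →
      pdT u t x + ε * pdX (fun t x => u t x ^ 2) t x + t * pdX3 u t x = 0)
    (v : ℝ → ℝ → ℝ)
    (hvu : ∀ t x : ℝ, (t, x) ∈ Ω →
      v (t / (1 - 2 * ε * s * t)) (x / (1 - 2 * ε * s * t))
        = (1 - 2 * ε * s * t) * u t x + s * x) :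
    ∀ t x : ℝ, (t, x) ∈ Ω →
      pdT v (t / (1 - 2 * ε * s * t)) (x / (1 - 2 * ε * s * t))
        + ε * pdX (fun τ y => v τ y ^ 2) (t / (1 - 2 * ε * s * t))
            (x / (1 - 2 * ε * s * t))
        + (t / (1 - 2 * ε * s * t)) * pdX3 v (t / (1 - 2 * ε * s * t))
            (x / (1 - 2 * ε * s * t)) = 0 := by
  subst hΩ
  rintro t x ⟨ht, hc⟩
  set c := 1 - 2 * ε * s * t
  have hcτ : c * (1 + 2 * ε * s * (t / c)) = 1 := by
    field_simp
    ring
  have hb : 0 < 1 + 2 * ε * s * (t / c) :=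
    pos_of_mul_pos_right (hcτ.symm ▸ one_pos) hc.le
  show kdvOperator ε v (t / c) (x / c) = 0
  rw [kdvOperator_congr (eventuallyEq_projectiveTransform hvu (div_pos ht hc) hb),
    kdvOperator_projectiveTransform ε (hu.of_le (WithTop.coe_le_coe.mpr le_top)) hcτ,
    mul_div_cancel₀ _ hc.ne', mul_div_cancel₀ _ hc.ne']
  exact mul_eq_zero_of_right _ (hupde t x ht)

/-- Remark 2, Case 3: the projective symmetry (finite form of
`2εt²∂_t + 2εtx∂_x + (x - 2εtu)∂_u`) of `u_t + ε(u²)_x + t u_xxx = 0`. -/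
theorem projective_symmetry_f_t
    (ε : ℝ) (hε : ε = 1 ∨ ε = -1) (s : ℝ)
    (Ω : Set (ℝ × ℝ)) (hΩ : Ω = {p : ℝ × ℝ | 0 < p.1 ∧ 0 < 1 - 2 * ε * s * p.1})
    (u : ℝ → ℝ → ℝ) (hu : ContDiff ℝ (⊤ : ℕ∞) (Function.uncurry u))
    (hupde : ∀ t x : ℝ, 0 < t →
      pdT u t x + ε * pdX (fun t x => u t x ^ 2) t x + t * pdX3 u t x = 0)
    (v : ℝ → ℝ → ℝ) (hv : ContDiff ℝ (⊤ : ℕ∞) (Function.uncurry v))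
    (hvu : ∀ t x : ℝ, (t, x) ∈ Ω →
      v (t / (1 - 2 * ε * s * t)) (x / (1 - 2 * ε * s * t))
        = (1 - 2 * ε * s * t) * u t x + s * x) :
    ∀ t x : ℝ, (t, x) ∈ Ω →
      pdT v (t / (1 - 2 * ε * s * t)) (x / (1 - 2 * ε * s * t))
        + ε * pdX (fun τ y => v τ y ^ 2) (t / (1 - 2 * ε * s * t))
            (x / (1 - 2 * ε * s * t))
        + (t / (1 - 2 * ε * s * t)) * pdX3 v (t / (1 - 2 * ε * s * t))
            (x / (1 - 2 * ε * s * t)) = 0 :=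
  projective_symmetry_f_t_general ε s Ω hΩ u hu hupde v hvu
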